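/- Let f: ℝ^d → ℝ be continuous and bounded below, β > 0, and suppose ∫ e^{−β f(x)} dμ(x) > 0. If f satisfies f(x) − f_* ≥ c_b‖x‖^ℓ − C_b and f(x) − f_* ≤ c_a‖x‖^ℓ + C_a with ℓ > 0 and positive constants, then there exists a constant C_𝓜 > 0, depending only on p, ℓ, c_b, C_b, c_a, C_a, β, such that the weighted mean 𝓜_β(μ) := (∫ x e^{−β f(x)} dμ(x)) / (∫ e^{−β f(x)} dμ(x)) satisfies ‖𝓜_β(μ)‖ ≤ C_𝓜 · (∫ ‖x‖^p dμ(x))^{1/p} for all μ ∈ 𝒫_p(ℝ^d) and all p ≥ 1. -/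

import Mathlib

open MeasureTheory

noncomputable section

/-- The consensus point `𝓜_β(μ) = (∫ x e^{-βf(x)} dμ) / (∫ e^{-βf(x)} dμ)`. -/
def consensus {d : ℕ} (β : ℝ) (f : EuclideanSpace ℝ (Fin d) → ℝ)
    (μ : Measure (EuclideanSpace ℝ (Fin d))) : EuclideanSpace ℝ (Fin d) :=
  (∫ x, Real.exp (-β * f x) ∂μ)⁻¹ • ∫ x, Real.exp (-β * f x) • x ∂μ

/-!
Write `w = exp (-β f)` and `m = ∫ ‖x‖ dμ`. The growth bounds squeeze `w` between multiples of
`exp (-β ca ‖x‖ ^ ℓ)` and `exp (-β cb ‖x‖ ^ ℓ)`. By Markov's inequality half of the mass of `μ`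
lies in the ball of radius `2 max 1 m`, so `∫ w dμ ≳ exp (-β ca 2 ^ ℓ (1 + m ^ ℓ))`. In
`∫ w ‖x‖ dμ`, the part inside the ball of radius `R = K m` is at most `R ∫ w dμ`, and outside it
`w ≤ exp (-β cb R ^ ℓ)`, which for `K ^ ℓ = 2 ^ ℓ ca / cb` is `exp (-β ca (2 m) ^ ℓ)`, so this part
is `≲ m ∫ w dμ` as well. Jensen's inequality `m ≤ (∫ ‖x‖ ^ p dμ) ^ (1 / p)` finishes the proof.
-/

open Real Metric

section Moments

variable {α F : Type*} [MeasurableSpace α] {μ : Measure α} [IsProbabilityMeasure μ]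
  [NormedAddCommGroup F] {g : α → F} {p : ℝ}

theorem integrable_norm_of_integrable_norm_rpow (hg : AEStronglyMeasurable g μ) (hp : 1 ≤ p)
    (hgp : Integrable (fun x => ‖g x‖ ^ p) μ) : Integrable (fun x => ‖g x‖) μ := by
  simpa using integrable_norm_rpow_of_le hg zero_le_one (by linarith) hp hgp

theorem integral_norm_le_integral_norm_rpow_rpow (hg : AEStronglyMeasurable g μ) (hp : 1 ≤ p)
    (hgp : Integrable (fun x => ‖g x‖ ^ p) μ) :
    ∫ x, ‖g x‖ ∂μ ≤ (∫ x, ‖g x‖ ^ p ∂μ) ^ (1 / p) := by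
  have hp0 : 0 < p := by linarith
  have jensen : (∫ x, ‖g x‖ ∂μ) ^ p ≤ ∫ x, ‖g x‖ ^ p ∂μ :=
    (convexOn_rpow hp).map_integral_le (continuousOn_id.rpow_const fun _ _ => Or.inr hp0.le)
      isClosed_Ici (.of_forall fun x => norm_nonneg (g x))
      (integrable_norm_of_integrable_norm_rpow hg hp hgp) hgp
  calc ∫ x, ‖g x‖ ∂μ = ((∫ x, ‖g x‖ ∂μ) ^ p) ^ (1 / p) := by
        rw [← rpow_mul (integral_nonneg fun x => norm_nonneg _), mul_one_div_cancel hp0.ne',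
          rpow_one]
    _ ≤ _ := by gcongr

end Moments

theorem mul_le_mul_add_of_le_exp_neg_rpow {v t R b c ℓ : ℝ} (hv : 0 ≤ v) (ht : 0 ≤ t)
    (hR : 0 ≤ R) (hc : 0 ≤ c) (hℓ : 0 ≤ ℓ) (hvb : v ≤ b * exp (-(c * t ^ ℓ))) :
    v * t ≤ R * v + b * exp (-(c * R ^ ℓ)) * t := by
  have hb : 0 ≤ b := nonneg_of_mul_nonneg_left (hv.trans hvb) (exp_pos _)
  rcases le_total t R with htR | hRt
  · nlinarith [mul_nonneg (mul_nonneg hb (exp_pos (-(c * R ^ ℓ))).le) ht]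
  · have hdecay : b * exp (-(c * t ^ ℓ)) ≤ b * exp (-(c * R ^ ℓ)) := by
      have := rpow_le_rpow hR hRt hℓ
      gcongr
    nlinarith [mul_le_mul_of_nonneg_right (hvb.trans hdecay) ht]

theorem two_mul_max_one_rpow_le {m ℓ : ℝ} (hm : 0 ≤ m) :
    (2 * max 1 m) ^ ℓ ≤ 2 ^ ℓ + (2 * m) ^ ℓ := by
  rcases le_total m 1 with hm1 | hm1
  · rw [max_eq_left hm1, mul_one]
    exact le_add_of_nonneg_right (by positivity)
  · rw [max_eq_right hm1]
    exact le_add_of_nonneg_left (by positivity)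

theorem half_le_measureReal_closedBall {E : Type*} [NormedAddCommGroup E] [MeasurableSpace E]
    [OpensMeasurableSpace E] {μ : Measure E} [IsProbabilityMeasure μ]
    (hμ : Integrable (fun x => ‖x‖) μ) {R : ℝ} (hR : 0 < R) (hmR : 2 * ∫ x, ‖x‖ ∂μ ≤ R) :
    1 / 2 ≤ μ.real (closedBall 0 R) := by
  have markov := mul_meas_ge_le_integral_of_nonneg (.of_forall fun x => norm_nonneg x) hμ R
  have hcompl : (closedBall (0 : E) R)ᶜ ⊆ {x | R ≤ ‖x‖} := fun x hx => by
    simpa using (not_le.1 (mt mem_closedBall_zero_iff.2 hx)).le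
  have htail : μ.real (closedBall (0 : E) R)ᶜ ≤ 1 / 2 := by
    have := measureReal_mono (μ := μ) hcompl
    rw [le_div_iff₀ two_pos]
    nlinarith
  rw [probReal_compl_eq_one_sub₀ measurableSet_closedBall.nullMeasurableSet] at htail
  linarith

section Weighted

variable {E : Type*} [NormedAddCommGroup E] [MeasurableSpace E] [OpensMeasurableSpace E]
  {μ : Measure E} {w : E → ℝ} {a b c ℓ : ℝ}

theorem le_integral_of_exp_neg_rpow_le [IsProbabilityMeasure μ] (hw : Integrable w μ)
    (hμ : Integrable (fun x => ‖x‖) μ) (hw0 : ∀ x, 0 ≤ w x) (ha : 0 ≤ a) (hc : 0 ≤ c)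
    (hℓ : 0 ≤ ℓ) (hwa : ∀ x, a * exp (-(c * ‖x‖ ^ ℓ)) ≤ w x) :
    a / 2 * exp (-(c * (2 * max 1 (∫ x, ‖x‖ ∂μ)) ^ ℓ)) ≤ ∫ x, w x ∂μ := by
  set R := 2 * max 1 (∫ x, ‖x‖ ∂μ)
  have hball : 1 / 2 ≤ μ.real (closedBall 0 R) :=
    half_le_measureReal_closedBall hμ (by positivity)
      (mul_le_mul_of_nonneg_left (le_max_right _ _) two_pos.le)
  have hwR : ∀ x ∈ closedBall (0 : E) R, a * exp (-(c * R ^ ℓ)) ≤ w x := fun x hx => by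
    have := rpow_le_rpow (norm_nonneg x) (mem_closedBall_zero_iff.1 hx) hℓ
    exact le_trans (by gcongr) (hwa x)
  calc a / 2 * exp (-(c * R ^ ℓ)) ≤ a * exp (-(c * R ^ ℓ)) * μ.real (closedBall 0 R) := by
        nlinarith [mul_nonneg ha (exp_pos (-(c * R ^ ℓ))).le]
    _ ≤ ∫ x in closedBall 0 R, w x ∂μ :=
        setIntegral_ge_of_const_le_real measurableSet_closedBall (measure_ne_top _ _) hwR
          hw.integrableOn
    _ ≤ ∫ x, w x ∂μ := setIntegral_le_integral hw (.of_forall hw0)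

variable [NormedSpace ℝ E]

theorem norm_integral_smul_le (hw : Integrable w μ) (hμ : Integrable (fun x => ‖x‖) μ)
    (hw0 : ∀ x, 0 ≤ w x) (hc : 0 ≤ c) (hℓ : 0 ≤ ℓ)
    (hwb : ∀ x, w x ≤ b * exp (-(c * ‖x‖ ^ ℓ))) {R : ℝ} (hR : 0 ≤ R) :
    ‖∫ x, w x • x ∂μ‖ ≤ R * ∫ x, w x ∂μ + b * exp (-(c * R ^ ℓ)) * ∫ x, ‖x‖ ∂μ := by
  have hnorm : ∀ x, ‖w x • x‖ = w x * ‖x‖ := fun x => by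
    rw [norm_smul, Real.norm_of_nonneg (hw0 x)]
  have hsplit : ∀ x, w x * ‖x‖ ≤ R * w x + b * exp (-(c * R ^ ℓ)) * ‖x‖ := fun x =>
    mul_le_mul_add_of_le_exp_neg_rpow (hw0 x) (norm_nonneg x) hR hc hℓ (hwb x)
  have hdom : Integrable (fun x => R * w x + b * exp (-(c * R ^ ℓ)) * ‖x‖) μ :=
    (hw.const_mul R).add (hμ.const_mul _)
  calc ‖∫ x, w x • x ∂μ‖ ≤ ∫ x, w x * ‖x‖ ∂μ := by
        simpa only [hnorm] using norm_integral_le_integral_norm (fun x => w x • x)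
    _ ≤ ∫ x, (R * w x + b * exp (-(c * R ^ ℓ)) * ‖x‖) ∂μ := by
        refine integral_mono (hdom.mono' ?_ (.of_forall fun x => ?_)) hdom hsplit
        · exact hw.aestronglyMeasurable.mul continuous_norm.aestronglyMeasurable
        · rw [Real.norm_of_nonneg (mul_nonneg (hw0 x) (norm_nonneg x))]
          exact hsplit x
    _ = R * ∫ x, w x ∂μ + b * exp (-(c * R ^ ℓ)) * ∫ x, ‖x‖ ∂μ := by
        rw [integral_add (hw.const_mul R) (hμ.const_mul _), integral_const_mul,
          integral_const_mul]

theorem norm_inv_integral_smul_integral_le [IsProbabilityMeasure μ] {c₁ c₂ : ℝ}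
    (hw : AEStronglyMeasurable w μ) (hμ : Integrable (fun x => ‖x‖) μ) (ha : 0 < a)
    (hc₁ : 0 < c₁) (hc₂ : 0 ≤ c₂) (hℓ : 0 < ℓ)
    (hwa : ∀ x, a * exp (-(c₂ * ‖x‖ ^ ℓ)) ≤ w x) (hwb : ∀ x, w x ≤ b * exp (-(c₁ * ‖x‖ ^ ℓ))) :
    ‖(∫ x, w x ∂μ)⁻¹ • ∫ x, w x • x ∂μ‖
      ≤ (2 * (c₂ / c₁) ^ ℓ⁻¹ + 2 * (b / a) * exp (c₂ * 2 ^ ℓ)) * ∫ x, ‖x‖ ∂μ := by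
  set m := ∫ x, ‖x‖ ∂μ
  set Z := ∫ x, w x ∂μ
  have hm : 0 ≤ m := integral_nonneg fun x => norm_nonneg x
  have hw0 : ∀ x, 0 ≤ w x := fun x => (mul_pos ha (exp_pos _)).le.trans (hwa x)
  have hb : 0 ≤ b := nonneg_of_mul_nonneg_left ((hw0 0).trans (hwb 0)) (exp_pos _)
  have hwi : Integrable w μ := .of_bound hw b (.of_forall fun x => by
    rw [Real.norm_of_nonneg (hw0 x)]
    exact (hwb x).trans
      (mul_le_of_le_one_right hb (exp_le_one_iff.2 (neg_nonpos.2 (by positivity)))))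
  set R := (c₂ / c₁) ^ ℓ⁻¹ * (2 * m)
  have hR : c₁ * R ^ ℓ = c₂ * (2 * m) ^ ℓ := by
    rw [mul_rpow (by positivity) (by positivity), rpow_inv_rpow (by positivity) hℓ.ne']
    field_simp
  have hnum := norm_integral_smul_le hwi hμ hw0 hc₁.le hℓ.le hwb (R := R) (by positivity)
  have hden := le_integral_of_exp_neg_rpow_le hwi hμ hw0 ha.le hc₂ hℓ.le hwa
  have hZ : 0 < Z := lt_of_lt_of_le (by positivity) hden
  have htail : b * exp (-(c₂ * (2 * m) ^ ℓ)) ≤ 2 * (b / a) * exp (c₂ * 2 ^ ℓ) * Z := by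
    have hmax := mul_le_mul_of_nonneg_left (two_mul_max_one_rpow_le (ℓ := ℓ) hm) hc₂
    calc b * exp (-(c₂ * (2 * m) ^ ℓ))
        = 2 * (b / a) * exp (c₂ * 2 ^ ℓ) * (a / 2 * exp (-(c₂ * (2 ^ ℓ + (2 * m) ^ ℓ)))) := by
          rw [mul_add, neg_add, exp_add, exp_neg (c₂ * 2 ^ ℓ)]
          field_simp
      _ ≤ 2 * (b / a) * exp (c₂ * 2 ^ ℓ) * Z := by
          gcongr
          exact le_trans (by gcongr) hden
  rw [norm_smul, norm_inv, Real.norm_of_nonneg hZ.le, inv_mul_le_iff₀ hZ]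
  calc ‖∫ x, w x • x ∂μ‖ ≤ R * Z + b * exp (-(c₁ * R ^ ℓ)) * m := hnum
    _ ≤ R * Z + 2 * (b / a) * exp (c₂ * 2 ^ ℓ) * Z * m := by
        rw [hR]
        gcongr
    _ = Z * ((2 * (c₂ / c₁) ^ ℓ⁻¹ + 2 * (b / a) * exp (c₂ * 2 ^ ℓ)) * m) := by ring

end Weighted

theorem stmt4_general {d : ℕ} (f : EuclideanSpace ℝ (Fin d) → ℝ) (hf : Continuous f)
    (β : ℝ) (hβ : 0 < β) (fstar : ℝ)
    (ℓ cb Cb ca Ca : ℝ) (hℓ : 0 < ℓ)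
    (hcb : 0 < cb) (hca : 0 < ca)
    (hlow : ∀ x, cb * ‖x‖ ^ ℓ - Cb ≤ f x - fstar)
    (hup : ∀ x, f x - fstar ≤ ca * ‖x‖ ^ ℓ + Ca)
    (p : ℝ) (hp : 1 ≤ p) :
    ∃ C > (0 : ℝ), ∀ μ : Measure (EuclideanSpace ℝ (Fin d)),
      IsProbabilityMeasure μ → Integrable (fun x => ‖x‖ ^ p) μ →
      0 < ∫ x, Real.exp (-β * f x) ∂μ →
      ‖consensus β f μ‖ ≤ C * (∫ x, ‖x‖ ^ p ∂μ) ^ (1 / p) := by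
  set a := exp (-β * (fstar + Ca))
  set b := exp (-β * (fstar - Cb))
  have hwa : ∀ x, a * exp (-(β * ca * ‖x‖ ^ ℓ)) ≤ exp (-β * f x) := fun x => by
    rw [← exp_add, exp_le_exp]
    nlinarith [hup x]
  have hwb : ∀ x, exp (-β * f x) ≤ b * exp (-(β * cb * ‖x‖ ^ ℓ)) := fun x => by
    rw [← exp_add, exp_le_exp]
    nlinarith [hlow x]
  refine ⟨2 * (β * ca / (β * cb)) ^ ℓ⁻¹ + 2 * (b / a) * exp (β * ca * 2 ^ ℓ), by positivity,
    fun μ _ hμp _ => ?_⟩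
  have hμ := integrable_norm_of_integrable_norm_rpow aestronglyMeasurable_id hp hμp
  calc ‖consensus β f μ‖
      ≤ (2 * (β * ca / (β * cb)) ^ ℓ⁻¹ + 2 * (b / a) * exp (β * ca * 2 ^ ℓ)) * ∫ x, ‖x‖ ∂μ :=
        norm_inv_integral_smul_integral_le (by fun_prop) hμ (exp_pos _) (by positivity)
          (by positivity) hℓ hwa hwb
    _ ≤ _ := by
        gcongr
        exact integral_norm_le_integral_norm_rpow_rpow aestronglyMeasurable_id hp hμp

/-- Sublinearity of the consensus point: under coercive growth bounds on `f` (with `ℓ > 0`),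
there is `C_𝓜 > 0` with `‖𝓜_β(μ)‖ ≤ C_𝓜 · 𝔪_p(μ)` for all `μ ∈ 𝒫_p(ℝ^d)`. -/
theorem stmt4 {d : ℕ} (f : EuclideanSpace ℝ (Fin d) → ℝ) (hf : Continuous f)
    (β : ℝ) (hβ : 0 < β) (fstar : ℝ) (hfstar : IsGLB (Set.range f) fstar)
    (ℓ cb Cb ca Ca : ℝ) (hℓ : 0 < ℓ)
    (hcb : 0 < cb) (hCb : 0 < Cb) (hca : 0 < ca) (hCa : 0 < Ca)
    (hlow : ∀ x, cb * ‖x‖ ^ ℓ - Cb ≤ f x - fstar)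
    (hup : ∀ x, f x - fstar ≤ ca * ‖x‖ ^ ℓ + Ca)
    (p : ℝ) (hp : 1 ≤ p) :
    ∃ C > (0 : ℝ), ∀ μ : Measure (EuclideanSpace ℝ (Fin d)),
      IsProbabilityMeasure μ → Integrable (fun x => ‖x‖ ^ p) μ →
      0 < ∫ x, Real.exp (-β * f x) ∂μ →
      ‖consensus β f μ‖ ≤ C * (∫ x, ‖x‖ ^ p ∂μ) ^ (1 / p) :=
  stmt4_general f hf β hβ fstar ℓ cb Cb ca Ca hℓ hcb hca hlow hup p hp
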